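/- arXiv:2604.19408 — 6 statements merged into one kernel-verified Lean document; each statement's English description precedes it below -/
import Mathlib

section
/- Let R be a finite commutative ring with identity and P a proper prime ideal. The prime ideal graph Γ_P(R) is isomorphic to the join K_a ∨ K̄_b of a complete graph on a = |P| - 1 vertices and an edgeless graph on b = |R| - |P| vertices. -/
/-!
The nonzero elements of `P` form a clique of `Γ_P(R)` because `P` absorbs products, the elements
outside `P` form an independent set because `P` is prime, and every element of `P` is adjacent to
every element outside it. A graph split in this way is the join of a complete graph and an
edgeless graph on the two parts.
-/

def primeIdealGraph (R : Type*) [CommRing R] (P : Ideal R) :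
    SimpleGraph {x : R // x ≠ 0} where
  Adj x y := x ≠ y ∧ (x : R) * y ∈ P
  symm := by
    refine ⟨?_⟩
    rintro x y ⟨h, hm⟩
    exact ⟨h.symm, by rwa [mul_comm]⟩
  loopless := ⟨by rintro x ⟨h, _⟩; exact h rfl⟩

def joinGraph {α β : Type*} (G : SimpleGraph α) (H : SimpleGraph β) :
    SimpleGraph (α ⊕ β) where
  Adj u v :=
    Sum.elim (fun x => Sum.elim (fun y => G.Adj x y) (fun _ => True) v)
             (fun x => Sum.elim (fun _ => True) (fun y => H.Adj x y) v) u
  symm := ⟨by rintro (x|x) (y|y) h <;> simp_all [SimpleGraph.adj_comm]⟩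
  loopless := ⟨by rintro (x|x) h <;> simp_all⟩

namespace SimpleGraph

variable {α α' β β' : Type*}

def Iso.joinGraph {G : SimpleGraph α} {G' : SimpleGraph α'} {H : SimpleGraph β}
    {H' : SimpleGraph β'} (e : G ≃g G') (f : H ≃g H') :
    joinGraph G H ≃g joinGraph G' H' where
  toEquiv := Equiv.sumCongr e.toEquiv f.toEquiv
  map_rel_iff' := by
    rintro (x | x) (y | y) <;> simp [_root_.joinGraph, e.map_adj_iff, f.map_adj_iff]

def Iso.bot (e : α ≃ β) : (⊥ : SimpleGraph α) ≃g (⊥ : SimpleGraph β) where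
  toEquiv := e
  map_rel_iff' := by simp

open Classical in
noncomputable def isoJoinTopBot {G : SimpleGraph α} {s : Set α} (hs : G.IsClique s)
    (hsc : G.IsIndepSet sᶜ) (hcross : ∀ x ∈ s, ∀ y ∉ s, G.Adj x y) :
    G ≃g joinGraph (⊤ : SimpleGraph s) (⊥ : SimpleGraph ↥sᶜ) where
  toEquiv := (Equiv.Set.sumCompl s).symm
  map_rel_iff' := by
    intro x y
    by_cases hx : x ∈ s <;> by_cases hy : y ∈ s <;>
      simp only [Equiv.Set.sumCompl_symm_apply_of_mem, Equiv.Set.sumCompl_symm_apply_of_notMem,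
        hx, hy, _root_.joinGraph, Sum.elim_inl, Sum.elim_inr, top_adj, bot_adj, ne_eq,
        Subtype.mk.injEq, not_false_eq_true]
    · exact ⟨fun h => hs hx hy h, G.ne_of_adj⟩
    · exact iff_of_true trivial (hcross x hx y hy)
    · exact iff_of_true trivial (hcross y hy x hx).symm
    · exact iff_of_false id fun h => hsc hx hy h.ne h

end SimpleGraph

namespace primeIdealGraph

variable {R : Type*} [CommRing R] (P : Ideal R)

def nonzeroMem : Set {x : R // x ≠ 0} := {x | (x : R) ∈ P}

theorem isClique_nonzeroMem : (primeIdealGraph R P).IsClique (nonzeroMem P) :=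
  fun _ hx _ _ hxy => ⟨hxy, P.mul_mem_right _ hx⟩

theorem isIndepSet_compl_nonzeroMem [P.IsPrime] :
    (primeIdealGraph R P).IsIndepSet (nonzeroMem P)ᶜ :=
  fun _ hx _ hy _ hxy => (‹P.IsPrime›.mem_or_mem hxy.2).elim hx hy

theorem adj_of_mem_of_notMem {x y : {x : R // x ≠ 0}} (hx : x ∈ nonzeroMem P)
    (hy : y ∉ nonzeroMem P) : (primeIdealGraph R P).Adj x y :=
  ⟨fun h => hy (h ▸ hx), P.mul_mem_right _ hx⟩

theorem card_nonzeroMem [Finite R] : Nat.card (nonzeroMem P) = Nat.card P - 1 := by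
  have himage : Subtype.val '' nonzeroMem P = (P : Set R) \ {0} := by
    ext; simp [nonzeroMem, and_comm]
  rw [← Nat.card_image_of_injective Subtype.val_injective, himage, Nat.card_coe_set_eq,
    Set.ncard_sdiff_singleton_of_mem P.zero_mem, ← Nat.card_coe_set_eq]
  rfl

theorem card_compl_nonzeroMem [Finite R] :
    Nat.card ↥(nonzeroMem P)ᶜ = Nat.card R - Nat.card P := by
  have himage : Subtype.val '' (nonzeroMem P)ᶜ = (P : Set R)ᶜ := by
    ext; simpa [nonzeroMem] using fun hx h => hx (h ▸ P.zero_mem)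
  rw [← Nat.card_image_of_injective Subtype.val_injective, himage, Nat.card_coe_set_eq,
    Set.ncard_compl, ← Nat.card_coe_set_eq]
  rfl

end primeIdealGraph

open primeIdealGraph SimpleGraph

theorem stmt_3_general (R : Type*) [CommRing R] [Fintype R] (P : Ideal R)
    [P.IsPrime] :
    Nonempty
      (primeIdealGraph R P ≃g
        joinGraph (⊤ : SimpleGraph (Fin (Nat.card P - 1)))
          (⊥ : SimpleGraph (Fin (Nat.card R - Nat.card P)))) :=
  ⟨(isoJoinTopBot (isClique_nonzeroMem P) (isIndepSet_compl_nonzeroMem P)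
      fun _ hx _ hy => adj_of_mem_of_notMem P hx hy).trans
    (Iso.joinGraph (Iso.completeGraph ((Finite.equivFin _).trans (finCongr (card_nonzeroMem P))))
      (Iso.bot ((Finite.equivFin _).trans (finCongr (card_compl_nonzeroMem P)))))⟩

/-- `Γ_P(R) ≅ K_a ∨ K̄_b` with `a = |P| - 1` and `b = |R| - |P|`. -/
theorem stmt_3 (R : Type*) [CommRing R] [Fintype R] (P : Ideal R)
    [P.IsPrime] (hP : P ≠ ⊤) :
    Nonempty
      (primeIdealGraph R P ≃g
        joinGraph (⊤ : SimpleGraph (Fin (Nat.card P - 1)))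
          (⊥ : SimpleGraph (Fin (Nat.card R - Nat.card P)))) :=
  stmt_3_general R P
end

section
/- Let S = k[x_1,…,x_a,y_1,…,y_b] with a ≥ 1, b ≥ 1, and I the edge ideal of K_a ∨ K̄_b. Then I is a radical ideal and its associated primes are exactly p_0 = (x_1,…,x_a) and p_i = (x_1,…,x̂_i,…,x_a,y_1,…,y_b) for 1 ≤ i ≤ a. -/
open MvPolynomial

/-- The edge ideal of the complete split graph `K_a ∨ K̄_b`. -/
noncomputable def splitEdgeIdeal (k : Type*) [Field k] (a b : ℕ) :
    Ideal (MvPolynomial (Fin a ⊕ Fin b) k) :=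
  Ideal.span
    ({p | ∃ i j : Fin a, i < j ∧ p = X (Sum.inl i) * X (Sum.inl j)} ∪
     {p | ∃ (i : Fin a) (t : Fin b), p = X (Sum.inl i) * X (Sum.inr t)})

/-!
The primes `p_0, …, p_a` are generated by the minimal vertex covers of `K_a ∨ K̄_b`, and a
monomial lies in the edge ideal as soon as its support meets each of these covers. All ideals
involved are monomial, so `I = p_0 ∩ p_1 ∩ ⋯ ∩ p_a`. Each `p_o` is prime, being the kernel of the
substitution killing its variables, and the `p_o` are pairwise incomparable (a variable `y_t`
separates `p_i` from `p_0`). For such an intersection the annihilator of the class of `r` is the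
intersection of the components not containing `r`: it is contained in one of them and, when prime,
contains one, so it is a component; conversely an element lying in all components but `p_o` has
annihilator `p_o`.
-/

namespace Ideal

variable {R ι : Type*} [CommRing R] [Fintype ι] {p : ι → Ideal R}

open scoped Classical in
theorem colon_mk_quotient_iInf (hp : ∀ i, (p i).IsPrime) (r : R) :
    (⊥ : Submodule R (R ⧸ ⨅ i, p i)).colon {Ideal.Quotient.mk _ r} =
      {i | r ∉ p i}.toFinset.inf p := by
  ext z
  simp only [Submodule.mem_colon_singleton, Submodule.mem_bot, Algebra.smul_def,
    Ideal.Quotient.algebraMap_eq, ← map_mul, Ideal.Quotient.eq_zero_iff_mem, Submodule.mem_iInf,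
    Submodule.mem_finsetInf, Set.mem_toFinset, Set.mem_ofPred_eq]
  exact forall_congr' fun i => (hp i).mul_mem_iff_mem_or_mem.trans or_iff_not_imp_right

theorem exists_notMem_forall_ne_mem (hp : ∀ i, (p i).IsPrime)
    (hinc : ∀ i j, p i ≤ p j → i = j) (i : ι) :
    ∃ w, w ∉ p i ∧ ∀ j ≠ i, w ∈ p j := by
  classical
  have hnle : ¬ (Finset.univ.erase i).inf p ≤ p i := by
    rw [(hp i).inf_le']
    rintro ⟨j, hj, hle⟩
    exact Finset.ne_of_mem_erase hj (hinc j i hle)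
  obtain ⟨w, hw, hwi⟩ := SetLike.not_le_iff_exists.mp hnle
  exact ⟨w, hwi, fun j hj =>
    Submodule.mem_finsetInf.mp hw j (Finset.mem_erase.mpr ⟨hj, Finset.mem_univ j⟩)⟩

theorem associatedPrimes_quotient_iInf (hp : ∀ i, (p i).IsPrime)
    (hinc : ∀ i j, p i ≤ p j → i = j) :
    associatedPrimes R (R ⧸ ⨅ i, p i) = Set.range p := by
  classical
  ext P
  constructor
  · rintro ⟨hP, x, rfl⟩
    obtain ⟨r, rfl⟩ := Ideal.Quotient.mk_surjective x
    rw [colon_mk_quotient_iInf hp] at hP ⊢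
    obtain ⟨j, hj, hjP⟩ := hP.inf_le'.mp le_radical
    exact ⟨j, le_antisymm hjP ((radical_mono (Finset.inf_le hj)).trans (hp j).radical.le)⟩
  · rintro ⟨i, rfl⟩
    obtain ⟨w, hwi, hw⟩ := exists_notMem_forall_ne_mem hp hinc i
    refine ⟨hp i, Ideal.Quotient.mk _ w, ?_⟩
    have hsupp : {j | w ∉ p j}.toFinset = {i} := by
      ext j
      simpa using ⟨not_imp_comm.mp (hw j), by rintro rfl; exact hwi⟩
    rw [colon_mk_quotient_iInf hp, hsupp, Finset.inf_singleton, (hp i).radical]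

end Ideal

namespace MvPolynomial

variable {R σ : Type*} [CommRing R]

theorem span_X_image_eq_ker_aeval (s : Set σ) :
    Ideal.span (X '' s : Set (MvPolynomial σ R)) =
      RingHom.ker (aeval (sᶜ.indicator X) : MvPolynomial σ R →ₐ[R] MvPolynomial σ R) := by
  set J := Ideal.span (X '' s : Set (MvPolynomial σ R))
  have hJ : (Ideal.Quotient.mkₐ R J).comp (aeval (sᶜ.indicator X)) = Ideal.Quotient.mkₐ R J := by
    ext v
    by_cases hv : v ∈ s
    · have hXv : (X v : MvPolynomial σ R) ∈ J := Ideal.subset_span (Set.mem_image_of_mem X hv)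
      simp [hv, Ideal.Quotient.eq_zero_iff_mem.mpr hXv]
    · simp [hv]
  refine le_antisymm (Ideal.span_le.mpr ?_) fun f hf => ?_
  · rintro _ ⟨v, hv, rfl⟩
    simp [hv]
  · rw [← Ideal.Quotient.eq_zero_iff_mem, ← Ideal.Quotient.mkₐ_eq_mk R, ← hJ, AlgHom.comp_apply,
      RingHom.mem_ker.mp hf, map_zero]

theorem isPrime_span_X_image [IsDomain R] (s : Set σ) :
    (Ideal.span (X '' s : Set (MvPolynomial σ R))).IsPrime :=
  span_X_image_eq_ker_aeval (R := R) s ▸ RingHom.ker_isPrime _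

theorem X_mem_span_X_image_iff [Nontrivial R] {s : Set σ} {v : σ} :
    (X v : MvPolynomial σ R) ∈ Ideal.span (X '' s) ↔ v ∈ s := by
  simp [mem_ideal_span_X_image, support_X, Finsupp.single_apply_eq_zero]

theorem span_X_image_le_span_X_image_iff [Nontrivial R] {s t : Set σ} :
    Ideal.span (X '' s : Set (MvPolynomial σ R)) ≤ Ideal.span (X '' t) ↔ s ⊆ t :=
  ⟨fun h _ hv => X_mem_span_X_image_iff.mp (h (X_mem_span_X_image_iff.mpr hv)),
    fun h => Ideal.span_mono (Set.image_mono h)⟩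

theorem X_mul_X_dvd_monomial {u v : σ} (huv : u ≠ v) {m : σ →₀ ℕ} (hu : m u ≠ 0) (hv : m v ≠ 0)
    (c : R) : X u * X v ∣ monomial m c := by
  rw [X, X, monomial_mul, one_mul, monomial_dvd_monomial]
  refine ⟨Or.inr fun w => ?_, one_dvd c⟩
  by_cases hwu : w = u
  · subst hwu
    simp [huv, Nat.one_le_iff_ne_zero.mpr hu]
  · by_cases hwv : w = v
    · subst hwv
      simp [Ne.symm huv, Nat.one_le_iff_ne_zero.mpr hv]
    · simp [Ne.symm hwu, Ne.symm hwv]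

end MvPolynomial

/-- `splitCover a b o` generates the prime `p_o` of the statement, with `p_none = p_0`. -/
def splitCover (a b : ℕ) : Option (Fin a) → Set (Fin a ⊕ Fin b)
  | none => Set.range Sum.inl
  | some i => {Sum.inl i}ᶜ

section SplitGraph

variable {k : Type*} [Field k] {a b : ℕ}

theorem eq_of_splitCover_subset (hb : 1 ≤ b) {o o' : Option (Fin a)}
    (h : splitCover a b o ⊆ splitCover a b o') : o = o' := by
  rcases o with _ | i <;> rcases o' with _ | i'
  · rfl
  · exact absurd (h ⟨i', rfl⟩) (by simp [splitCover])
  · have hy : (Sum.inr ⟨0, hb⟩ : Fin a ⊕ Fin b) ∈ splitCover a b (some i) := Sum.inr_ne_inl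
    exact absurd (h hy) (by simp [splitCover])
  · simpa [splitCover, eq_comm] using h

theorem X_inl_mul_X_mem_splitEdgeIdeal (i : Fin a) {v : Fin a ⊕ Fin b} (hv : v ≠ Sum.inl i) :
    X (Sum.inl i) * X v ∈ splitEdgeIdeal k a b := by
  rcases v with j | t
  · rcases lt_or_gt_of_ne fun h : i = j => hv (congrArg Sum.inl h.symm) with hij | hji
    · exact Ideal.subset_span (Or.inl ⟨i, j, hij, rfl⟩)
    · rw [mul_comm]
      exact Ideal.subset_span (Or.inl ⟨j, i, hji, rfl⟩)
  · exact Ideal.subset_span (Or.inr ⟨i, t, rfl⟩)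

theorem X_inl_mul_X_mem_span_splitCover (o : Option (Fin a)) (i : Fin a)
    {v : Fin a ⊕ Fin b} (hv : v ≠ Sum.inl i) :
    (X (Sum.inl i) * X v : MvPolynomial (Fin a ⊕ Fin b) k) ∈
      Ideal.span (X '' splitCover a b o) := by
  rcases o with _ | l
  · exact Ideal.mul_mem_right _ _ (Ideal.subset_span ⟨_, ⟨i, rfl⟩, rfl⟩)
  · by_cases hil : i = l
    · subst hil
      exact Ideal.mul_mem_left _ _ (Ideal.subset_span ⟨v, hv, rfl⟩)
    · exact Ideal.mul_mem_right _ _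
        (Ideal.subset_span ⟨Sum.inl i, fun h => hil (Sum.inl_injective h), rfl⟩)

theorem splitEdgeIdeal_le_span_splitCover (o : Option (Fin a)) :
    splitEdgeIdeal k a b ≤ Ideal.span (X '' splitCover a b o) := by
  refine Ideal.span_le.mpr ?_
  rintro _ (⟨i, j, hij, rfl⟩ | ⟨i, t, rfl⟩)
  · exact X_inl_mul_X_mem_span_splitCover o i fun h => hij.ne' (Sum.inl_injective h)
  · exact X_inl_mul_X_mem_span_splitCover o i Sum.inr_ne_inl

theorem monomial_mem_splitEdgeIdeal {m : Fin a ⊕ Fin b →₀ ℕ}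
    (hm : ∀ o, ∃ v ∈ splitCover a b o, m v ≠ 0) (c : k) :
    monomial m c ∈ splitEdgeIdeal k a b := by
  obtain ⟨_, ⟨i, rfl⟩, hi⟩ := hm none
  obtain ⟨v, hv, hmv⟩ := hm (some i)
  exact Ideal.mem_of_dvd _ (X_mul_X_dvd_monomial (Ne.symm hv) hi hmv c)
    (X_inl_mul_X_mem_splitEdgeIdeal i hv)

theorem splitEdgeIdeal_eq_iInf :
    splitEdgeIdeal k a b = ⨅ o, Ideal.span (X '' splitCover a b o) := by
  refine le_antisymm (le_iInf splitEdgeIdeal_le_span_splitCover) fun f hf => ?_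
  rw [f.as_sum]
  exact Ideal.sum_mem _ fun m hm => monomial_mem_splitEdgeIdeal
    (fun o => mem_ideal_span_X_image.mp (Submodule.mem_iInf _ |>.mp hf o) m hm) _

theorem X_image_splitCover_none :
    (X '' splitCover a b none : Set (MvPolynomial (Fin a ⊕ Fin b) k)) =
      {p | ∃ i : Fin a, p = X (Sum.inl i)} := by
  ext
  simp [splitCover, eq_comm]

theorem X_image_splitCover_some (i : Fin a) :
    (X '' splitCover a b (some i) : Set (MvPolynomial (Fin a ⊕ Fin b) k)) =
      {p | ∃ j : Fin a, j ≠ i ∧ p = X (Sum.inl j)} ∪ {p | ∃ t : Fin b, p = X (Sum.inr t)} := by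
  ext
  simp [splitCover, Sum.exists, eq_comm]

end SplitGraph

theorem stmt_8_general (k : Type*) [Field k] (a b : ℕ) (hb : 1 ≤ b) :
    (splitEdgeIdeal k a b).IsRadical ∧
    associatedPrimes (MvPolynomial (Fin a ⊕ Fin b) k)
        (MvPolynomial (Fin a ⊕ Fin b) k ⧸ splitEdgeIdeal k a b) =
      insert
        (Ideal.span {p : MvPolynomial (Fin a ⊕ Fin b) k |
            ∃ i : Fin a, p = X (Sum.inl i)})
        (Set.range fun i : Fin a =>
          Ideal.span
            ({p : MvPolynomial (Fin a ⊕ Fin b) k |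
                ∃ j : Fin a, j ≠ i ∧ p = X (Sum.inl j)} ∪
             {p | ∃ t : Fin b, p = X (Sum.inr t)})) := by
  have hprime (o : Option (Fin a)) :
      (Ideal.span (X '' splitCover a b o) : Ideal (MvPolynomial (Fin a ⊕ Fin b) k)).IsPrime :=
    isPrime_span_X_image _
  have hinc (o o' : Option (Fin a))
      (h : (Ideal.span (X '' splitCover a b o) : Ideal (MvPolynomial (Fin a ⊕ Fin b) k)) ≤
        Ideal.span (X '' splitCover a b o')) : o = o' :=
    eq_of_splitCover_subset hb (span_X_image_le_span_X_image_iff.mp h)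
  rw [splitEdgeIdeal_eq_iInf]
  refine ⟨Ideal.isRadical_iInf _ fun o => (hprime o).isRadical, ?_⟩
  simp only [Ideal.associatedPrimes_quotient_iInf hprime hinc, Option.range_eq,
    Function.comp_def, X_image_splitCover_none, X_image_splitCover_some]

/-- `I` is radical, and the associated primes of `S/I` are exactly
`p_0 = (x_1,…,x_a)` and `p_i = (x_1,…,x̂_i,…,x_a,y_1,…,y_b)`, `1 ≤ i ≤ a`. -/
theorem stmt_8 (k : Type*) [Field k] (a b : ℕ) (ha : 1 ≤ a) (hb : 1 ≤ b) :
    (splitEdgeIdeal k a b).IsRadical ∧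
    associatedPrimes (MvPolynomial (Fin a ⊕ Fin b) k)
        (MvPolynomial (Fin a ⊕ Fin b) k ⧸ splitEdgeIdeal k a b) =
      insert
        (Ideal.span {p : MvPolynomial (Fin a ⊕ Fin b) k |
            ∃ i : Fin a, p = X (Sum.inl i)})
        (Set.range fun i : Fin a =>
          Ideal.span
            ({p : MvPolynomial (Fin a ⊕ Fin b) k |
                ∃ j : Fin a, j ≠ i ∧ p = X (Sum.inl j)} ∪
             {p | ∃ t : Fin b, p = X (Sum.inr t)})) :=
  stmt_8_general k a b hb
end

section
/- Let J = (x_i x_j : 1 ≤ i < j ≤ a) ⊆ k[x_1,…,x_a] with a ≥ 2 be the edge ideal of the complete graph K_a. For every q ≥ 1, the minimal monomial generating set of J^q is exactly {x^δ : |δ| = 2q and 0 ≤ δ_i ≤ q for all i}. -/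
/-!
`J^q` is spanned by the monomials `x^μ` with `μ` a sum of `q` edge vectors `e_i + e_j`
(`i ≠ j`), and a monomial `x^δ` is a minimal generator of a monomial ideal iff `δ` is a minimal
exponent. Sums of `q` edge vectors all have degree `2q`, so they form an antichain and every one
of them is minimal. Conversely a vector of degree `2q` with entries `≤ q` is such a sum:
subtracting `e_i + e_j` for two largest coordinates `i ≠ j` leaves entries `≤ q - 1`, because a
third coordinate equal to `q` would force degree `≥ 3q`.
-/

open MvPolynomial Pointwise

/-- `m` is a minimal generator of the monomial ideal `L`: it lies in `L` but
not in `𝔪·L`, where `𝔪` is the ideal generated by all the variables. -/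
def isMinimalGenerator {sigma k : Type*} [Field k]
    (L : Ideal (MvPolynomial sigma k)) (m : MvPolynomial sigma k) : Prop :=
  m ∈ L ∧
    m ∉ Ideal.span (Set.range (MvPolynomial.X : sigma → MvPolynomial sigma k)) * L

section

variable {σ : Type*}

lemma Finsupp.sum_le_degree (μ : σ →₀ ℕ) (s : Finset σ) : ∑ x ∈ s, μ x ≤ μ.degree := by
  classical
  calc ∑ x ∈ s, μ x ≤ ∑ x ∈ s ∪ μ.support, μ x :=
        Finset.sum_le_sum_of_subset Finset.subset_union_left
    _ = μ.degree := (Finset.sum_subset Finset.subset_union_right (by simp)).symm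

lemma Finsupp.exists_single_add_le_of_lt {μ δ : σ →₀ ℕ} (h : μ < δ) :
    ∃ i, Finsupp.single i 1 + μ ≤ δ := by
  obtain ⟨i, hi⟩ : ∃ i, μ i < δ i := by
    by_contra! hle
    exact h.not_ge fun i => hle i
  refine ⟨i, fun l => ?_⟩
  rcases eq_or_ne i l with rfl | hil
  · simpa [Nat.add_comm 1] using hi
  · simpa [Finsupp.single_apply, hil] using h.le l

lemma Finsupp.isAntichain_degree_eq (n : ℕ) :
    IsAntichain (· ≤ ·) {μ : σ →₀ ℕ | μ.degree = n} := by
  intro μ hμ δ hδ hne hle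
  obtain ⟨ν, rfl⟩ := le_iff_exists_add.mp hle
  have hν : ν = 0 := by
    rw [← Finsupp.degree_eq_zero_iff]
    simp only [Set.mem_ofPred_eq, map_add] at hμ hδ
    omega
  exact hne (by rw [hν, add_zero])

lemma Finsupp.exists_two_largest {μ : σ →₀ ℕ} (hμ : μ ≠ 0) (hlt : ∀ i, μ i < μ.degree) :
    ∃ i j, i ≠ j ∧ μ j ≠ 0 ∧ (∀ l, μ l ≤ μ i) ∧ ∀ l ≠ i, μ l ≤ μ j := by
  classical
  obtain ⟨i, hi, hmax⟩ := μ.support.exists_max_image μ (Finsupp.support_nonempty_iff.mpr hμ)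
  have hrest : (μ.support.erase i).Nonempty := by
    have hsplit := Finset.add_sum_erase μ.support μ hi
    rw [← Finsupp.degree_apply] at hsplit
    refine Finset.nonempty_of_sum_ne_zero (f := μ) ?_
    have := hlt i
    omega
  obtain ⟨j, hj, hmax'⟩ := (μ.support.erase i).exists_max_image μ hrest
  obtain ⟨hji, hj⟩ := Finset.mem_erase.mp hj
  have hle_of_notMem : ∀ l ∉ μ.support, μ l ≤ μ i ∧ μ l ≤ μ j := fun l hl => by
    simp [Finsupp.notMem_support_iff.mp hl]
  refine ⟨i, j, Ne.symm hji, Finsupp.mem_support_iff.mp hj, fun l => ?_, fun l hl => ?_⟩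
  · by_cases hl : l ∈ μ.support
    exacts [hmax l hl, (hle_of_notMem l hl).1]
  · by_cases hl' : l ∈ μ.support
    exacts [hmax' l (Finset.mem_erase.mpr ⟨hl, hl'⟩), (hle_of_notMem l hl').2]

def edgeExponents (σ : Type*) : Set (σ →₀ ℕ) :=
  {μ | ∃ i j, i ≠ j ∧ μ = Finsupp.single i 1 + Finsupp.single j 1}

lemma degree_eq_two_of_mem_edgeExponents {e : σ →₀ ℕ} (he : e ∈ edgeExponents σ) :
    e.degree = 2 := by
  obtain ⟨i, j, -, rfl⟩ := he
  simp

lemma apply_le_one_of_mem_edgeExponents {e : σ →₀ ℕ} (he : e ∈ edgeExponents σ) (l : σ) :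
    e l ≤ 1 := by
  classical
  obtain ⟨i, j, hij, rfl⟩ := he
  simp only [Finsupp.add_apply, Finsupp.single_apply]
  split_ifs <;> simp_all

lemma exists_eq_add_edge_of_degree_eq {n : ℕ} {μ : σ →₀ ℕ} (hdeg : μ.degree = 2 * (n + 1))
    (hle : ∀ l, μ l ≤ n + 1) : ∃ e ∈ edgeExponents σ, ∃ ν, μ = ν + e ∧ ∀ l, ν l ≤ n := by
  classical
  have hμ : μ ≠ 0 := by
    rintro rfl
    simp at hdeg
  obtain ⟨i, j, hij, hj0, hmax, hsecond⟩ :=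
    Finsupp.exists_two_largest hμ fun l => (hle l).trans_lt (by omega)
  have hmaxj := hmax j
  set e := Finsupp.single i 1 + Finsupp.single j 1 with he
  have hbound : ∀ l, e l ≤ μ l ∧ μ l ≤ n + e l := fun l => by
    have := hle l
    by_cases hli : l = i
    · subst hli
      have : e l = 1 := by simp [he, Ne.symm hij]
      omega
    by_cases hlj : l = j
    · subst hlj
      have : e l = 1 := by simp [he, hli]
      omega
    have : e l = 0 := by simp [he, Ne.symm hli, Ne.symm hlj]
    have h3 := μ.sum_le_degree {i, j, l}
    rw [Finset.sum_insert (by simp [hij, Ne.symm hli]),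
      Finset.sum_pair (Ne.symm hlj)] at h3
    have := hsecond l hli
    omega
  refine ⟨e, ⟨i, j, hij, rfl⟩, μ - e, (tsub_add_cancel_of_le fun l => (hbound l).1).symm,
    fun l => ?_⟩
  rw [Finsupp.tsub_apply]
  have := hbound l
  omega

theorem mem_nsmul_edgeExponents_iff {q : ℕ} {μ : σ →₀ ℕ} :
    μ ∈ q • edgeExponents σ ↔ μ.degree = 2 * q ∧ ∀ i, μ i ≤ q := by
  induction q generalizing μ with
  | zero =>
    simp only [zero_smul, Set.mem_zero, nonpos_iff_eq_zero, Nat.mul_zero]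
    exact ⟨fun h => by simp [h], fun h => (Finsupp.degree_eq_zero_iff μ).mp h.1⟩
  | succ n ih =>
    rw [succ_nsmul, Set.mem_add]
    constructor
    · rintro ⟨ν, hν, e, he, rfl⟩
      obtain ⟨hdeg, hle⟩ := ih.1 hν
      refine ⟨by rw [map_add, hdeg, degree_eq_two_of_mem_edgeExponents he]; ring, fun l => ?_⟩
      have := apply_le_one_of_mem_edgeExponents he l
      have := hle l
      simp only [Finsupp.add_apply]
      omega
    · rintro ⟨hdeg, hle⟩
      obtain ⟨e, he, ν, rfl, hν⟩ := exists_eq_add_edge_of_degree_eq hdeg hle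
      refine ⟨ν, ih.2 ⟨?_, hν⟩, e, he, rfl⟩
      rw [map_add, degree_eq_two_of_mem_edgeExponents he] at hdeg
      omega

lemma isAntichain_nsmul_edgeExponents (q : ℕ) : IsAntichain (· ≤ ·) (q • edgeExponents σ) :=
  (Finsupp.isAntichain_degree_eq (2 * q)).subset fun _ hμ => (mem_nsmul_edgeExponents_iff.mp hμ).1

variable {R : Type*} [CommSemiring R]

lemma image_monomial_one_add (A B : Set (σ →₀ ℕ)) :
    (fun s => monomial s (1 : R)) '' (A + B) =
      (fun s => monomial s 1) '' A * (fun s => monomial s 1) '' B :=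
  Set.image_image2_distrib fun _ _ => by rw [monomial_mul, one_mul]

lemma image_monomial_one_nsmul (A : Set (σ →₀ ℕ)) (q : ℕ) :
    (fun s => monomial s (1 : R)) '' (q • A) = ((fun s => monomial s 1) '' A) ^ q := by
  induction q with
  | zero => simp [Set.singleton_one]
  | succ n ih => rw [succ_nsmul, pow_succ, image_monomial_one_add, ih]

lemma span_monomial_one_pow (A : Set (σ →₀ ℕ)) (q : ℕ) :
    Ideal.span ((fun s => monomial s (1 : R)) '' A) ^ q =
      Ideal.span ((fun s => monomial s 1) '' (q • A)) := by
  rw [image_monomial_one_nsmul, Ideal.span, Submodule.span_pow]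

lemma span_monomial_one_mul (A B : Set (σ →₀ ℕ)) :
    Ideal.span ((fun s => monomial s (1 : R)) '' A) * Ideal.span ((fun s => monomial s 1) '' B) =
      Ideal.span ((fun s => monomial s 1) '' (A + B)) := by
  rw [Ideal.span_mul_span', image_monomial_one_add]

lemma monomial_one_mem_span_monomial_one_iff [Nontrivial R] {A : Set (σ →₀ ℕ)} {δ : σ →₀ ℕ} :
    monomial δ (1 : R) ∈ Ideal.span ((fun s => monomial s 1) '' A) ↔ ∃ μ ∈ A, μ ≤ δ := by
  classical
  simp [mem_ideal_span_monomial_image, support_monomial]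

lemma range_X_eq_image_monomial_one :
    Set.range (X : σ → MvPolynomial σ R) =
      (fun s => monomial s 1) '' Set.range (Finsupp.single · 1) := by
  rw [← Set.range_comp]; rfl

lemma setOf_X_mul_X_eq_image_edgeExponents [LinearOrder σ] :
    {p : MvPolynomial σ R | ∃ i j : σ, i < j ∧ p = X i * X j} =
      (fun s => monomial s 1) '' edgeExponents σ := by
  have hX : ∀ i j : σ, (X i * X j : MvPolynomial σ R) =
      monomial (Finsupp.single i 1 + Finsupp.single j 1) 1 := fun i j => by
    rw [X, X, monomial_mul, mul_one]
  ext p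
  constructor
  · rintro ⟨i, j, hij, rfl⟩
    exact ⟨_, ⟨i, j, hij.ne, rfl⟩, (hX i j).symm⟩
  · rintro ⟨_, ⟨i, j, hij, rfl⟩, rfl⟩
    rcases hij.lt_or_gt with h | h
    · exact ⟨i, j, h, (hX i j).symm⟩
    · exact ⟨j, i, h, by rw [hX, add_comm]⟩

theorem isMinimalGenerator_span_monomial_one_iff {k : Type*} [Field k] {A : Set (σ →₀ ℕ)}
    {δ : σ →₀ ℕ} :
    isMinimalGenerator (Ideal.span ((fun s => monomial s (1 : k)) '' A)) (monomial δ 1) ↔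
      Minimal (· ∈ A) δ := by
  rw [isMinimalGenerator, range_X_eq_image_monomial_one, span_monomial_one_mul,
    monomial_one_mem_span_monomial_one_iff, monomial_one_mem_span_monomial_one_iff,
    minimal_iff_forall_lt]
  constructor
  · rintro ⟨⟨μ, hμ, hμδ⟩, hnot⟩
    have hmin : ∀ ν ∈ A, ¬ν < δ := fun ν hν hlt =>
      let ⟨i, hi⟩ := Finsupp.exists_single_add_le_of_lt hlt
      hnot ⟨_, Set.add_mem_add ⟨i, rfl⟩ hν, hi⟩
    obtain rfl := hμδ.eq_of_not_lt (hmin μ hμ)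
    exact ⟨hμ, fun ν hlt hν => hmin ν hν hlt⟩
  · rintro ⟨hδ, hmin⟩
    refine ⟨⟨δ, hδ, le_rfl⟩, ?_⟩
    rintro ⟨_, ⟨_, ⟨i, rfl⟩, μ, hμ, rfl⟩, hle⟩
    exact hmin ((lt_add_of_pos_left μ (by simp [pos_iff_ne_zero])).trans_le hle) hμ

end

theorem stmt_11_general (k : Type*) [Field k] (a q : ℕ)
    (J : Ideal (MvPolynomial (Fin a) k))
    (hJ : J = Ideal.span {p | ∃ i j : Fin a, i < j ∧ p = X i * X j})
    (δ : Fin a →₀ ℕ) :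
    isMinimalGenerator (J ^ q) (monomial δ (1 : k)) ↔
      (∑ i, δ i) = 2 * q ∧ ∀ i, δ i ≤ q := by
  rw [hJ, setOf_X_mul_X_eq_image_edgeExponents, span_monomial_one_pow,
    isMinimalGenerator_span_monomial_one_iff, (isAntichain_nsmul_edgeExponents q).minimal_mem_iff,
    mem_nsmul_edgeExponents_iff, Finsupp.degree_eq_sum]

/-- `G(J^q) = {x^δ : |δ| = 2q, δ_i ≤ q}` for `J` the edge ideal of `K_a`. -/
theorem stmt_11 (k : Type*) [Field k] (a q : ℕ) (ha : 2 ≤ a) (hq : 1 ≤ q)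
    (J : Ideal (MvPolynomial (Fin a) k))
    (hJ : J = Ideal.span {p | ∃ i j : Fin a, i < j ∧ p = X i * X j})
    (δ : Fin a →₀ ℕ) :
    isMinimalGenerator (J ^ q) (monomial δ (1 : k)) ↔
      (∑ i, δ i) = 2 * q ∧ ∀ i, δ i ≤ q :=
  stmt_11_general k a q J hJ δ
end

section
/- Let a ≥ 1, b ≥ 1, and I = (x_i x_j : 1 ≤ i < j ≤ a) + (x_i y_t : 1 ≤ i ≤ a, 1 ≤ t ≤ b) ⊆ k[x_1,…,x_a,y_1,…,y_b]. For every n ≥ 1, a monomial x^α y^β lies in the minimal generating set of I^n if and only if |α| + |β| = 2n, |β| ≤ n, and 0 ≤ α_i ≤ n for all i. -/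
open MvPolynomial

namespace Stmt14Aux


variable {a b : ℕ}

def GenSet (a b : ℕ) : Set (Fin a ⊕ Fin b →₀ ℕ) :=
  {μ | ∃ i j : Fin a, i < j ∧
      μ = Finsupp.single (Sum.inl i) 1 + Finsupp.single (Sum.inl j) 1} ∪
  {μ | ∃ (i : Fin a) (t : Fin b),
      μ = Finsupp.single (Sum.inl i) 1 + Finsupp.single (Sum.inr t) 1}

def Spow (a b : ℕ) : ℕ → Set (Fin a ⊕ Fin b →₀ ℕ)
  | 0 => {0}
  | n + 1 => Set.image2 (· + ·) (GenSet a b) (Spow a b n)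

def dA (μ : Fin a ⊕ Fin b →₀ ℕ) : ℕ := ∑ i : Fin a, μ (Sum.inl i)
def dB (μ : Fin a ⊕ Fin b →₀ ℕ) : ℕ := ∑ t : Fin b, μ (Sum.inr t)

lemma dA_add (μ ν : Fin a ⊕ Fin b →₀ ℕ) : dA (μ + ν) = dA μ + dA ν := by
  simp [dA, Finset.sum_add_distrib]

lemma dB_add (μ ν : Fin a ⊕ Fin b →₀ ℕ) : dB (μ + ν) = dB μ + dB ν := by
  simp [dB, Finset.sum_add_distrib]

lemma dA_single_inl (i : Fin a) : dA (b := b) (Finsupp.single (Sum.inl i) 1) = 1 := by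
  simp [dA, Finsupp.single_apply, Sum.inl.injEq]

lemma dA_single_inr (t : Fin b) : dA (a := a) (Finsupp.single (Sum.inr t) 1) = 0 := by
  simp [dA, Finsupp.single_apply]

lemma dB_single_inl (i : Fin a) : dB (b := b) (Finsupp.single (Sum.inl i) 1) = 0 := by
  simp [dB, Finsupp.single_apply]

lemma dB_single_inr (t : Fin b) : dB (a := a) (Finsupp.single (Sum.inr t) 1) = 1 := by
  simp [dB, Finsupp.single_apply, Sum.inr.injEq]

def Cond (a b n : ℕ) (μ : Fin a ⊕ Fin b →₀ ℕ) : Prop :=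
  dA μ + dB μ = 2 * n ∧ dB μ ≤ n ∧ ∀ i : Fin a, μ (Sum.inl i) ≤ n

lemma gen_facts {s : Fin a ⊕ Fin b →₀ ℕ} (hs : s ∈ GenSet a b) :
    dA s + dB s = 2 ∧ dB s ≤ 1 ∧ ∀ i : Fin a, s (Sum.inl i) ≤ 1 := by
  rcases hs with ⟨i, j, hij, rfl⟩ | ⟨i, t, rfl⟩
  · refine ⟨?_, ?_, ?_⟩
    · simp [dA_add, dB_add, dA_single_inl, dB_single_inl]
    · simp [dB_add, dB_single_inl]
    · intro l
      simp only [Finsupp.add_apply, Finsupp.single_apply]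
      rcases eq_or_ne (Sum.inl i : Fin a ⊕ Fin b) (Sum.inl l) with h | h <;>
        rcases eq_or_ne (Sum.inl j : Fin a ⊕ Fin b) (Sum.inl l) with h' | h'
      · exact absurd (Sum.inl.inj (h.trans h'.symm)) hij.ne
      all_goals simp [h, h']
  · refine ⟨?_, ?_, ?_⟩
    · simp [dA_add, dB_add, dA_single_inl, dB_single_inl, dA_single_inr, dB_single_inr]
    · simp [dB_add, dB_single_inl, dB_single_inr]
    · intro l
      simp only [Finsupp.add_apply, Finsupp.single_apply]
      split <;> simp

lemma spow_cond {n : ℕ} {μ : Fin a ⊕ Fin b →₀ ℕ} (h : μ ∈ Spow a b n) :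
    Cond a b n μ := by
  induction n generalizing μ with
  | zero =>
    simp only [Spow, Set.mem_singleton_iff] at h
    subst h
    refine ⟨by simp [dA, dB], by simp [dB], by simp⟩
  | succ m ih =>
    obtain ⟨s, hs, ν, hν, rfl⟩ := h
    obtain ⟨h1, h2, h3⟩ := ih hν
    obtain ⟨g1, g2, g3⟩ := gen_facts hs
    refine ⟨by rw [dA_add, dB_add]; omega, by rw [dB_add]; omega, fun i => ?_⟩
    have := g3 i
    have := h3 i
    simp only [Finsupp.add_apply]
    omega

lemma cond_spow {n : ℕ} {μ : Fin a ⊕ Fin b →₀ ℕ} (h : Cond a b n μ) :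
    μ ∈ Spow a b n := by
  induction n generalizing μ with
  | zero =>
    obtain ⟨h1, -, -⟩ := h
    have hA : dA μ = 0 := by omega
    have hB : dB μ = 0 := by omega
    have : μ = 0 := by
      ext x
      rcases x with i | t
      · exact (Finset.sum_eq_zero_iff.mp hA) i (Finset.mem_univ i)
      · exact (Finset.sum_eq_zero_iff.mp hB) t (Finset.mem_univ t)
    simp [Spow, this]
  | succ m ih =>
    obtain ⟨h1, h2, h3⟩ := h
    have hdApos : dA μ ≠ 0 := by omega
    obtain ⟨i0, -, hi0⟩ := Finset.exists_ne_zero_of_sum_ne_zero hdApos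
    obtain ⟨i, -, hi⟩ := Finset.exists_max_image Finset.univ
      (fun i : Fin a => μ (Sum.inl i)) ⟨i0, Finset.mem_univ i0⟩
    have hipos : 0 < μ (Sum.inl i) :=
      lt_of_lt_of_le (Nat.pos_of_ne_zero hi0) (hi i0 (Finset.mem_univ i0))
    have hpair : ∀ j : Fin a, j ≠ i →
        μ (Sum.inl i) + μ (Sum.inl j) ≤ dA μ := by
      intro j hj
      have hsub : ({i, j} : Finset (Fin a)) ⊆ Finset.univ := Finset.subset_univ _
      have := Finset.sum_le_sum_of_subset (f := fun l : Fin a => μ (Sum.inl l)) hsub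
      rwa [Finset.sum_pair (Ne.symm hj)] at this
    rcases Nat.eq_zero_or_pos (dB μ) with hB0 | hBpos
    · -- all y-exponents zero; subtract x_i x_j
      have hdA : dA μ = 2 * m + 2 := by omega
      have herase : μ (Sum.inl i) + ∑ l ∈ Finset.univ.erase i, μ (Sum.inl l) = dA μ :=
        Finset.add_sum_erase Finset.univ (fun l : Fin a => μ (Sum.inl l)) (Finset.mem_univ i)
      have hemne : (∑ l ∈ Finset.univ.erase i, μ (Sum.inl l)) ≠ 0 := by
        have := h3 i
        omega
      obtain ⟨j0, hj0mem, hj0⟩ := Finset.exists_ne_zero_of_sum_ne_zero hemne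
      obtain ⟨j, hjmem, hj⟩ := Finset.exists_max_image (Finset.univ.erase i)
        (fun l : Fin a => μ (Sum.inl l)) ⟨j0, hj0mem⟩
      have hji : j ≠ i := (Finset.mem_erase.mp hjmem).1
      have hij : i ≠ j := hji.symm
      have hjpos : 0 < μ (Sum.inl j) :=
        lt_of_lt_of_le (Nat.pos_of_ne_zero hj0) (hj j0 hj0mem)
      set s : Fin a ⊕ Fin b →₀ ℕ :=
        Finsupp.single (Sum.inl i) 1 + Finsupp.single (Sum.inl j) 1 with hs_def
      have hsgen : s ∈ GenSet a b := by
        rcases lt_or_gt_of_ne hij with h | h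
        · exact Or.inl ⟨i, j, h, rfl⟩
        · exact Or.inl ⟨j, i, h, by rw [hs_def, add_comm]⟩
      have hsval : ∀ x, s x = (if x = Sum.inl i then 1 else 0) +
          (if x = Sum.inl j then 1 else 0) := by
        intro x
        simp [hs_def, Finsupp.single_apply, eq_comm]
      have hsle : s ≤ μ := by
        intro x
        rw [hsval]
        split_ifs with hx1 hx2 hx2
        · exact absurd (Sum.inl.inj ((hx1.symm.trans hx2))) hij
        · subst hx1; omega
        · subst hx2; omega
        · omega
      refine ⟨s, hsgen, μ - s, ih ?_, add_tsub_cancel_of_le hsle⟩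
      have heq : μ = s + (μ - s) := (add_tsub_cancel_of_le hsle).symm
      have hA' : dA μ = dA s + dA (μ - s) := by rw [← dA_add, ← heq]
      have hB' : dB μ = dB s + dB (μ - s) := by rw [← dB_add, ← heq]
      have hdAs : dA s = 2 := by
        simp [hs_def, dA_add, dA_single_inl]
      have hdBs : dB s = 0 := by
        simp [hs_def, dB_add, dB_single_inl]
      refine ⟨by omega, by omega, fun l => ?_⟩
      have hval : μ (Sum.inl l) = s (Sum.inl l) + (μ - s) (Sum.inl l) := by
        conv_lhs => rw [heq, Finsupp.add_apply]
      rcases eq_or_ne l i with rfl | hli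
      · have hs1 : s (Sum.inl l) = 1 := by
          rw [hsval]
          simp [Sum.inl.injEq, hij]
        have := h3 l
        omega
      · rcases eq_or_ne l j with rfl | hlj
        · have hs1 : s (Sum.inl l) = 1 := by
            rw [hsval]
            simp [Sum.inl.injEq, hji]
          have := h3 l
          omega
        · have hs0 : s (Sum.inl l) = 0 := by
            rw [hsval]
            simp [Sum.inl.injEq, hli, hlj]
          have hlmem : l ∈ Finset.univ.erase i := Finset.mem_erase.mpr ⟨hli, Finset.mem_univ l⟩
          have hlj' : μ (Sum.inl l) ≤ μ (Sum.inl j) := hj l hlmem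
          have hij' : μ (Sum.inl j) ≤ μ (Sum.inl i) := hi j (Finset.mem_univ j)
          have hpairsum : μ (Sum.inl j) + μ (Sum.inl l) ≤
              ∑ x ∈ Finset.univ.erase i, μ (Sum.inl x) := by
            have hsub : ({j, l} : Finset (Fin a)) ⊆ Finset.univ.erase i := by
              intro x hx
              rcases Finset.mem_insert.mp hx with rfl | hx
              · exact hjmem
              · rw [Finset.mem_singleton] at hx
                subst hx
                exact hlmem
            have := Finset.sum_le_sum_of_subset (f := fun x : Fin a => μ (Sum.inl x)) hsub
            rwa [Finset.sum_pair (fun hc => hlj hc.symm)] at this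
          have := h3 i
          omega
    · -- dB μ > 0 : subtract x_i y_t
      obtain ⟨t, -, ht⟩ := Finset.exists_ne_zero_of_sum_ne_zero (by omega : dB μ ≠ 0)
      have htpos : 0 < μ (Sum.inr t) := Nat.pos_of_ne_zero ht
      set s : Fin a ⊕ Fin b →₀ ℕ :=
        Finsupp.single (Sum.inl i) 1 + Finsupp.single (Sum.inr t) 1 with hs_def
      have hsgen : s ∈ GenSet a b := Or.inr ⟨i, t, rfl⟩
      have hsval : ∀ x, s x = (if x = Sum.inl i then 1 else 0) +
          (if x = Sum.inr t then 1 else 0) := by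
        intro x
        simp [hs_def, Finsupp.single_apply, eq_comm]
      have hsle : s ≤ μ := by
        intro x
        rw [hsval]
        split_ifs with hx1 hx2 hx2
        · exact absurd (hx1.symm.trans hx2) (by simp)
        · subst hx1; omega
        · subst hx2; omega
        · omega
      refine ⟨s, hsgen, μ - s, ih ?_, add_tsub_cancel_of_le hsle⟩
      have heq : μ = s + (μ - s) := (add_tsub_cancel_of_le hsle).symm
      have hA' : dA μ = dA s + dA (μ - s) := by rw [← dA_add, ← heq]
      have hB' : dB μ = dB s + dB (μ - s) := by rw [← dB_add, ← heq]
      have hdAs : dA s = 1 := by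
        simp [hs_def, dA_add, dA_single_inl, dA_single_inr]
      have hdBs : dB s = 1 := by
        simp [hs_def, dB_add, dB_single_inl, dB_single_inr]
      refine ⟨by omega, by omega, fun l => ?_⟩
      have hval : μ (Sum.inl l) = s (Sum.inl l) + (μ - s) (Sum.inl l) := by
        conv_lhs => rw [heq, Finsupp.add_apply]
      rcases eq_or_ne l i with rfl | hli
      · have hs1 : s (Sum.inl l) = 1 := by
          rw [hsval]; simp
        have := h3 l
        omega
      · have hs0 : s (Sum.inl l) = 0 := by
          rw [hsval]; simp [Sum.inl.injEq, hli]
        have hle : μ (Sum.inl l) ≤ μ (Sum.inl i) := hi l (Finset.mem_univ l)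
        have := hpair l hli
        have := h3 i
        omega


variable {k : Type*} [Field k]

lemma span_image_mul (A B : Set (Fin a ⊕ Fin b →₀ ℕ)) :
    Ideal.span ((fun e => (monomial e (1 : k))) '' A) *
      Ideal.span ((fun e => (monomial e (1 : k))) '' B) =
    Ideal.span ((fun e => (monomial e (1 : k))) '' Set.image2 (· + ·) A B) := by
  rw [Ideal.span_mul_span']
  congr 1
  rw [← Set.image2_mul, Set.image2_image_left, Set.image2_image_right, Set.image_image2]
  apply Set.image2_congr'
  intro x y
  rw [monomial_mul, one_mul]

lemma mem_span_mono (A : Set (Fin a ⊕ Fin b →₀ ℕ)) (μ : Fin a ⊕ Fin b →₀ ℕ) :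
    (monomial μ (1 : k)) ∈ Ideal.span ((fun e => (monomial e (1 : k))) '' A) ↔
      ∃ ν ∈ A, ν ≤ μ := by
  rw [mem_ideal_span_monomial_image]
  simp [support_monomial, (one_ne_zero : (1 : k) ≠ 0)]

lemma span_pow (j : ℕ) :
    Ideal.span ((fun e => (monomial e (1 : k))) '' GenSet a b) ^ (j + 1) =
    Ideal.span ((fun e => (monomial e (1 : k))) '' Spow a b (j + 1)) := by
  induction j with
  | zero =>
    rw [pow_one]
    congr 1
    show _ = (fun e => (monomial e (1 : k))) '' Set.image2 (· + ·) (GenSet a b) {0}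
    rw [Set.image2_singleton_right]
    simp
  | succ m ih =>
    rw [pow_succ, ih, span_image_mul]
    congr 1
    show _ = (fun e => (monomial e (1 : k))) '' Set.image2 (· + ·) (GenSet a b) (Spow a b (m + 1))
    rw [Set.image2_comm (fun x y => add_comm x y)]

lemma range_X_eq :
    (Set.range (X : Fin a ⊕ Fin b → MvPolynomial (Fin a ⊕ Fin b) k)) =
      (fun e => (monomial e (1 : k))) ''
        Set.range (fun x : Fin a ⊕ Fin b => Finsupp.single x 1) := by
  rw [← Set.range_comp]
  rfl

lemma dA_mono {μ ν : Fin a ⊕ Fin b →₀ ℕ} (h : ν ≤ μ) : dA ν ≤ dA μ :=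
  Finset.sum_le_sum fun i _ => (Finsupp.le_def.mp h) (Sum.inl i)

lemma dB_mono {μ ν : Fin a ⊕ Fin b →₀ ℕ} (h : ν ≤ μ) : dB ν ≤ dB μ :=
  Finset.sum_le_sum fun t _ => (Finsupp.le_def.mp h) (Sum.inr t)

lemma d_single (x : Fin a ⊕ Fin b) :
    dA (Finsupp.single x 1) + dB (Finsupp.single x 1) = 1 := by
  rcases x with i | t
  · rw [dA_single_inl, dB_single_inl]
  · rw [dA_single_inr, dB_single_inr]

lemma minGen_iff (m : ℕ) (μ : Fin a ⊕ Fin b →₀ ℕ) :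
    isMinimalGenerator
      ((Ideal.span ((fun e => (monomial e (1 : k))) '' GenSet a b)) ^ (m + 1))
      (monomial μ (1 : k)) ↔ μ ∈ Spow a b (m + 1) := by
  constructor
  · rintro ⟨h1, h2⟩
    rw [span_pow, mem_span_mono] at h1
    obtain ⟨ν, hν, hle⟩ := h1
    have hμν : μ = ν := by
      by_contra hne
      have hex : ∃ x, ν x < μ x := by
        by_contra hno
        push_neg at hno
        exact hne (Finsupp.ext fun x =>
          le_antisymm (hno x) ((Finsupp.le_def.mp hle) x))
      obtain ⟨x, hx⟩ := hex
      apply h2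
      rw [span_pow, range_X_eq, span_image_mul, mem_span_mono]
      refine ⟨Finsupp.single x 1 + ν, ⟨_, ⟨x, rfl⟩, _, hν, rfl⟩, ?_⟩
      intro y
      rcases eq_or_ne y x with rfl | hy
      · simp only [Finsupp.add_apply, Finsupp.single_apply, eq_self_iff_true, if_true]
        omega
      · simpa [Finsupp.single_apply, (Ne.symm hy)] using (Finsupp.le_def.mp hle) y
    rw [hμν]
    exact hν
  · intro h
    obtain ⟨c1, c2, -⟩ := spow_cond h
    constructor
    · rw [span_pow, mem_span_mono]
      exact ⟨μ, h, le_rfl⟩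
    · intro hmem
      rw [span_pow, range_X_eq, span_image_mul, mem_span_mono] at hmem
      obtain ⟨ρ, hρ, hρle⟩ := hmem
      obtain ⟨τ, ⟨x0, rfl⟩, ν, hν, rfl⟩ := hρ
      obtain ⟨e1, -, -⟩ := spow_cond hν
      have hρle' : (Finsupp.single x0 1 + ν) ≤ μ := hρle
      have hdx := d_single (a := a) (b := b) x0
      have h1 := dA_mono hρle'
      have h2' := dB_mono hρle'
      rw [dA_add] at h1
      rw [dB_add] at h2'
      omega

end Stmt14Aux

open Stmt14Aux

/-- `x^α y^β ∈ G(I^n)` iff `|α| + |β| = 2n`, `|β| ≤ n`, and `α_i ≤ n` for all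
`i`, where `I` is the edge ideal of `K_a ∨ K̄_b`. -/
theorem stmt_14 (k : Type*) [Field k] (a b n : ℕ) (ha : 1 ≤ a) (hb : 1 ≤ b)
    (hn : 1 ≤ n)
    (I : Ideal (MvPolynomial (Fin a ⊕ Fin b) k))
    (hI : I = Ideal.span
      ({p | ∃ i j : Fin a, i < j ∧ p = X (Sum.inl i) * X (Sum.inl j)} ∪
       {p | ∃ (i : Fin a) (t : Fin b), p = X (Sum.inl i) * X (Sum.inr t)}))
    (μ : (Fin a ⊕ Fin b) →₀ ℕ) :
    isMinimalGenerator (I ^ n) (monomial μ (1 : k)) ↔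
      (∑ i : Fin a, μ (Sum.inl i)) + (∑ t : Fin b, μ (Sum.inr t)) = 2 * n ∧
      (∑ t : Fin b, μ (Sum.inr t)) ≤ n ∧
      ∀ i : Fin a, μ (Sum.inl i) ≤ n := by
  obtain ⟨m, rfl⟩ : ∃ m, n = m + 1 := ⟨n - 1, by omega⟩
  have hXX : ∀ u v : Fin a ⊕ Fin b,
      (X u * X v : MvPolynomial (Fin a ⊕ Fin b) k) =
        monomial (Finsupp.single u 1 + Finsupp.single v 1) 1 := by
    intro u v
    show monomial _ _ * monomial _ _ = _
    rw [monomial_mul, one_mul]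
  have hset :
      ({p | ∃ i j : Fin a, i < j ∧
          p = (X (Sum.inl i) * X (Sum.inl j) : MvPolynomial (Fin a ⊕ Fin b) k)} ∪
       {p | ∃ (i : Fin a) (t : Fin b), p = X (Sum.inl i) * X (Sum.inr t)}) =
      (fun e => (monomial e (1 : k))) '' GenSet a b := by
    ext p
    constructor
    · rintro (⟨i, j, hij, rfl⟩ | ⟨i, t, rfl⟩)
      · exact ⟨_, Or.inl ⟨i, j, hij, rfl⟩, (hXX _ _).symm⟩
      · exact ⟨_, Or.inr ⟨i, t, rfl⟩, (hXX _ _).symm⟩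
    · rintro ⟨e, (⟨i, j, hij, rfl⟩ | ⟨i, t, rfl⟩), rfl⟩
      · exact Or.inl ⟨i, j, hij, (hXX _ _).symm⟩
      · exact Or.inr ⟨i, t, (hXX _ _).symm⟩
  subst hI
  rw [hset, minGen_iff m μ]
  exact ⟨fun h => spow_cond h, fun h => cond_spow h⟩
end

section
/- Let a ≥ 1, b ≥ 1, and I the edge ideal of K_a ∨ K̄_b. For every n ≥ 1, the number of minimal monomial generators of I^n equals Σ_{s=0}^{n} C(s + b - 1, b - 1) · [ C(2n - s + a - 1, a - 1) - a·C(n - s + a - 2, a - 1) ], with the convention that C(r, s) = 0 if r < 0 or r < s. -/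
/-!
Minimal generators of a monomial ideal generated in a single degree are exactly its monomial
generators, so `μ(I^n)` counts the exponent vectors of products of `n` edges of `K_a ∨ K̄_b`.
Collapsing all the `y_t` to a single vertex, these are the degree sequences of loopless
multigraphs with `n` edges on `a + 1` vertices: total degree `2n` and no vertex of degree above
`n` (greedily remove an edge between two vertices of largest degree). Sorting them by the total
`y`-degree `s`, the `x`-part is a composition of `2n - s` into `a` parts bounded by `n`, counted by
inclusion–exclusion, which stops after one step because at most one part can exceed `n`.
-/

open MvPolynomial

open Finsupp Pointwise

namespace MvPolynomial

variable {σ k : Type*}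

section CommSemiring

variable [CommSemiring k]

noncomputable def monomialIdeal (A : Set (σ →₀ ℕ)) : Ideal (MvPolynomial σ k) :=
  Ideal.span ((monomial · 1) '' A)

theorem monomialIdeal_add (A B : Set (σ →₀ ℕ)) :
    (monomialIdeal (A + B) : Ideal (MvPolynomial σ k)) = monomialIdeal A * monomialIdeal B := by
  simp only [monomialIdeal]
  rw [Ideal.span_mul_span', ← Set.image2_mul,
    Set.image2_image_left, Set.image2_image_right, ← Set.image2_add, Set.image_image2]
  simp only [monomial_mul, one_mul]

theorem monomialIdeal_nsmul (A : Set (σ →₀ ℕ)) (m : ℕ) :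
    (monomialIdeal (m • A) : Ideal (MvPolynomial σ k)) = monomialIdeal A ^ m := by
  induction m with
  | zero => simp [monomialIdeal, Ideal.one_eq_top]
  | succ m ih => rw [succ_nsmul', monomialIdeal_add, ih, pow_succ']

theorem span_range_X_eq_monomialIdeal :
    Ideal.span (Set.range (X : σ → MvPolynomial σ k)) = monomialIdeal {d | degree d = 1} := by
  rw [monomialIdeal, ← range_single_one, ← Set.range_comp]
  rfl

theorem monomial_mem_monomialIdeal_iff [Nontrivial k] {A : Set (σ →₀ ℕ)} {μ : σ →₀ ℕ} :
    monomial μ (1 : k) ∈ monomialIdeal A ↔ ∃ ν ∈ A, ν ≤ μ := by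
  classical
  rw [monomialIdeal, mem_ideal_span_monomial_image, support_monomial, if_neg one_ne_zero]
  simp

end CommSemiring

theorem isMinimalGenerator_monomial_iff [Field k] {A : Set (σ →₀ ℕ)} {d : ℕ}
    (hA : ∀ ν ∈ A, degree ν = d) {μ : σ →₀ ℕ} :
    isMinimalGenerator (monomialIdeal A) (monomial μ (1 : k)) ↔ μ ∈ A := by
  rw [isMinimalGenerator, span_range_X_eq_monomialIdeal, ← monomialIdeal_add,
    monomial_mem_monomialIdeal_iff, monomial_mem_monomialIdeal_iff]
  constructor
  · rintro ⟨⟨ν, hν, hνμ⟩, hmin⟩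
    obtain rfl | hne := eq_or_ne ν μ
    · exact hν
    have hpos : 1 ≤ degree (μ - ν) := by
      rw [Nat.one_le_iff_ne_zero, Ne, degree_eq_zero_iff, tsub_eq_zero_iff_le]
      exact fun h => hne (le_antisymm hνμ h)
    obtain ⟨e, he, hdeg⟩ := exists_le_degree_eq _ 1 hpos
    exact (hmin ⟨e + ν, Set.add_mem_add hdeg hν, le_tsub_iff_right hνμ |>.mp he⟩).elim
  · refine fun hμ => ⟨⟨μ, hμ, le_rfl⟩, ?_⟩
    rintro ⟨_, ⟨e, he, ν, hν, rfl⟩, hle⟩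
    have := degree_mono hle
    simp only [map_add, Set.mem_ofPred_eq.mp he, hA ν hν, hA μ hμ] at this
    omega

end MvPolynomial

namespace Finsupp

variable {ι : Type*}

theorem single_add_single_le {u v : ι} (huv : u ≠ v) {μ : ι →₀ ℕ} (hu : 0 < μ u)
    (hv : 0 < μ v) : single u 1 + single v 1 ≤ μ := by
  classical
  intro w
  simp only [add_apply, single_apply]
  split_ifs <;> subst_vars <;> first | omega | exact absurd rfl huv

theorem exists_ne_pos_pos_forall_le_of_degree_eq {w : ι →₀ ℕ} {m : ℕ}
    (hdeg : degree w = 2 * (m + 1)) (hw : ∀ q, w q ≤ m + 1) :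
    ∃ u v, u ≠ v ∧ 0 < w u ∧ 0 < w v ∧ ∀ q, q ≠ u → q ≠ v → w q ≤ m := by
  classical
  have hsum : ∑ q ∈ w.support, w q = 2 * (m + 1) := hdeg
  obtain ⟨u, hu, hu_max⟩ := w.support.exists_max_image w
    (support_nonempty_iff.mpr fun h => by simp [h] at hdeg)
  have hrest : ∑ q ∈ w.support.erase u, w q ≠ 0 := by
    have := Finset.add_sum_erase _ w hu
    have := hw u
    omega
  obtain ⟨v, hv, hv_max⟩ := (w.support.erase u).exists_max_image w
    (Finset.nonempty_of_sum_ne_zero hrest)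
  have hvu : v ≠ u := Finset.ne_of_mem_erase hv
  refine ⟨u, v, hvu.symm, Nat.pos_of_ne_zero (mem_support_iff.mp hu),
    Nat.pos_of_ne_zero (mem_support_iff.mp (Finset.mem_of_mem_erase hv)), fun q hqu hqv => ?_⟩
  by_cases hq : q ∈ w.support
  · have hqu_le := hu_max q hq
    have hqv_le := hv_max q (Finset.mem_erase.mpr ⟨hqu, hq⟩)
    -- `w u` and `w v` are the two largest entries, so `3 * w q ≤ w q + w u + w v ≤ 2 * (m + 1)`
    have htriple : w q + (w u + w v) ≤ 2 * (m + 1) := by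
      rw [← hsum, ← Finset.sum_pair (f := w) hvu.symm, ← Finset.sum_insert (by simp [hqu, hqv])]
      exact Finset.sum_le_sum_of_subset (by
        simp [Finset.insert_subset_iff, hq, hu, Finset.mem_of_mem_erase hv])
    omega
  · simp [notMem_support_iff.mp hq]

end Finsupp

namespace Finset

variable {ι : Type*} [Fintype ι] [DecidableEq ι]

@[simp]
theorem mem_univ_finsuppAntidiag {d : ℕ} {α : ι →₀ ℕ} :
    α ∈ (univ : Finset ι).finsuppAntidiag d ↔ degree α = d := by
  simp [degree_eq_sum]

theorem card_finsuppAntidiag_fin {c : ℕ} (hc : c ≠ 0) (d : ℕ) :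
    #((univ : Finset (Fin c)).finsuppAntidiag d) = (d + c - 1).choose (c - 1) := by
  rw [card_finsuppAntidiag_nat_eq_choose, card_univ, Fintype.card_fin,
    ← Nat.choose_symm (by omega)]
  congr 1 <;> omega

theorem card_filter_le_apply_finsuppAntidiag (i : ι) {B d : ℕ} (hB : B ≤ d) :
    #{α ∈ (univ : Finset ι).finsuppAntidiag d | B ≤ α i} =
      #((univ : Finset ι).finsuppAntidiag (d - B)) := by
  have hle {α : ι →₀ ℕ} (h : B ≤ α i) : single i B ≤ α := single_le_iff.mpr h
  refine card_nbij' (· - single i B) (· + single i B) (fun α hα => ?_) (fun β hβ => ?_)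
    (fun α hα => tsub_add_cancel_of_le (hle (mem_filter.mp hα).2))
    (fun β _ => add_tsub_cancel_right β _)
  · simp only [coe_filter, Set.mem_ofPred_eq, mem_univ_finsuppAntidiag, mem_coe] at hα ⊢
    have := congrArg degree (add_tsub_cancel_of_le (hle hα.2))
    rw [map_add, degree_single] at this
    omega
  · simp only [coe_filter, Set.mem_ofPred_eq, mem_univ_finsuppAntidiag, mem_coe] at hβ ⊢
    simp [hβ, hB]

theorem card_filter_forall_le_finsuppAntidiag {n d : ℕ} (hnd : n < d) (hd : d < 2 * (n + 1)) :
    #{α ∈ (univ : Finset ι).finsuppAntidiag d | ∀ i, α i ≤ n} =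
      #((univ : Finset ι).finsuppAntidiag d) -
        Fintype.card ι * #((univ : Finset ι).finsuppAntidiag (d - (n + 1))) := by
  set s := (univ : Finset ι).finsuppAntidiag d
  have hbad : {α ∈ s | ¬ ∀ i, α i ≤ n} = univ.biUnion fun i => {α ∈ s | n + 1 ≤ α i} := by
    ext α
    simp only [not_forall, not_le, mem_filter, mem_biUnion, mem_univ, true_and]
    exact ⟨fun ⟨h, i, hi⟩ => ⟨i, h, hi⟩, fun ⟨i, h, hi⟩ => ⟨h, i, hi⟩⟩
  -- no two coordinates can exceed `n`, as they sum to at most `d < 2 (n + 1)`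
  have hdisj : (Set.univ : Set ι).PairwiseDisjoint fun i => {α ∈ s | n + 1 ≤ α i} := by
    intro i _ j _ hij
    refine disjoint_left.mpr fun α hαi hαj => ?_
    simp only [mem_filter, s, mem_univ_finsuppAntidiag] at hαi hαj
    have : α i + α j ≤ degree α := by
      rw [degree_eq_sum, ← sum_pair hij]
      exact sum_le_sum_of_subset (subset_univ _)
    omega
  have := card_filter_add_card_filter_not (s := s) (fun α => ∀ i, α i ≤ n)
  rw [hbad, card_biUnion (by simpa using hdisj),
    sum_congr rfl fun i _ => card_filter_le_apply_finsuppAntidiag (B := n + 1) i hnd,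
    sum_const, card_univ, smul_eq_mul] at this
  omega

end Finset

namespace CompleteSplit

open Finset Sum

variable {a b : ℕ}

def edgeExponents (a b : ℕ) : Set (Fin a ⊕ Fin b →₀ ℕ) :=
  {ν | ∃ i j : Fin a, i < j ∧ ν = single (inl i) 1 + single (inl j) 1} ∪
    {ν | ∃ (i : Fin a) (t : Fin b), ν = single (inl i) 1 + single (inr t) 1}

theorem span_edges_eq_monomialIdeal (k : Type*) [CommSemiring k] :
    Ideal.span
      ({p | ∃ i j : Fin a, i < j ∧ p = X (inl i) * X (inl j)} ∪
        {p | ∃ (i : Fin a) (t : Fin b), p = X (inl i) * X (inr t)} :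
          Set (MvPolynomial (Fin a ⊕ Fin b) k)) =
      monomialIdeal (edgeExponents a b) := by
  have hX (u v : Fin a ⊕ Fin b) :
      (X u * X v : MvPolynomial (Fin a ⊕ Fin b) k) = monomial (single u 1 + single v 1) 1 := by
    rw [X, X, monomial_mul, one_mul]
  rw [monomialIdeal, edgeExponents, Set.image_union]
  congr 2 <;> ext p <;> simp [hX, eq_comm]

noncomputable def collapseY : (Fin a ⊕ Fin b →₀ ℕ) →+ (Option (Fin a) →₀ ℕ) :=
  mapDomain.addMonoidHom (Sum.elim some fun _ => none)

@[simp]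
theorem collapseY_single (v : Fin a ⊕ Fin b) (r : ℕ) :
    collapseY (single v r) = single (Sum.elim some (fun _ => none) v) r :=
  mapDomain_single

theorem degree_collapseY (μ : Fin a ⊕ Fin b →₀ ℕ) : degree (collapseY μ) = degree μ :=
  degree_mapDomain _ μ

theorem collapseY_apply_none (μ : Fin a ⊕ Fin b →₀ ℕ) :
    collapseY μ none = ∑ t, μ (inr t) := by
  simp [collapseY, mapDomain, Finsupp.sum_fintype, Fintype.sum_sum_type]

theorem collapseY_apply_some (μ : Fin a ⊕ Fin b →₀ ℕ) (i : Fin a) :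
    collapseY μ (some i) = μ (inl i) := by
  simp [collapseY, mapDomain, Finsupp.sum_fintype, Fintype.sum_sum_type, single_apply]

theorem exists_collapseY_eq_of_mem_edgeExponents {g : Fin a ⊕ Fin b →₀ ℕ}
    (hg : g ∈ edgeExponents a b) :
    ∃ u v : Option (Fin a), u ≠ v ∧ collapseY g = single u 1 + single v 1 := by
  rcases hg with ⟨i, j, hij, rfl⟩ | ⟨i, t, rfl⟩
  · exact ⟨some i, some j, by simpa using hij.ne, by simp⟩
  · exact ⟨some i, none, by simp, by simp⟩

theorem degree_of_mem_edgeExponents {g : Fin a ⊕ Fin b →₀ ℕ} (hg : g ∈ edgeExponents a b) :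
    degree g = 2 := by
  obtain ⟨u, v, -, hg⟩ := exists_collapseY_eq_of_mem_edgeExponents hg
  rw [← degree_collapseY, hg, map_add, degree_single, degree_single]

theorem single_inl_add_single_inl_mem_edgeExponents {i j : Fin a} (hij : i ≠ j) :
    single (inl i) 1 + single (inl j) 1 ∈ edgeExponents a b := by
  rcases hij.lt_or_gt with h | h
  · exact Or.inl ⟨i, j, h, rfl⟩
  · exact Or.inl ⟨j, i, h, add_comm _ _⟩

theorem exists_mem_edgeExponents_le {μ : Fin a ⊕ Fin b →₀ ℕ} {u v : Option (Fin a)}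
    (huv : u ≠ v) (hu : 0 < collapseY μ u) (hv : 0 < collapseY μ v) :
    ∃ g ∈ edgeExponents a b, g ≤ μ ∧ collapseY g = single u 1 + single v 1 := by
  have hy (hμ : 0 < collapseY μ none) : ∃ t, 0 < μ (inr t) := by
    rw [collapseY_apply_none] at hμ
    simpa [Finset.sum_pos_iff] using hμ
  rcases u with _ | i <;> rcases v with _ | j
  · exact absurd rfl huv
  · obtain ⟨t, ht⟩ := hy hu
    rw [collapseY_apply_some] at hv
    exact ⟨_, Or.inr ⟨j, t, rfl⟩, add_comm (single _ 1) _ ▸ single_add_single_le (by simp) ht hv,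
      by simp [add_comm]⟩
  · obtain ⟨t, ht⟩ := hy hv
    rw [collapseY_apply_some] at hu
    exact ⟨_, Or.inr ⟨i, t, rfl⟩, single_add_single_le (by simp) hu ht, by simp⟩
  · rw [collapseY_apply_some] at hu hv
    have hij : i ≠ j := fun h => huv (h ▸ rfl)
    exact ⟨_, single_inl_add_single_inl_mem_edgeExponents hij,
      single_add_single_le (by simpa using hij) hu hv, by simp⟩

theorem mem_nsmul_edgeExponents_iff {m : ℕ} {μ : Fin a ⊕ Fin b →₀ ℕ} :
    μ ∈ m • edgeExponents a b ↔ degree μ = 2 * m ∧ ∀ q, collapseY μ q ≤ m := by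
  induction m generalizing μ with
  | zero =>
    simp +contextual [degree_eq_zero_iff]
  | succ m ih =>
    rw [succ_nsmul', Set.mem_add]
    constructor
    · rintro ⟨g, hg, ν, hν, rfl⟩
      obtain ⟨u, v, huv, hgc⟩ := exists_collapseY_eq_of_mem_edgeExponents hg
      obtain ⟨hνdeg, hνle⟩ := ih.mp hν
      refine ⟨by rw [map_add, degree_of_mem_edgeExponents hg, hνdeg]; ring, fun q => ?_⟩
      have := hνle q
      rw [map_add, Finsupp.add_apply, hgc, Finsupp.add_apply, single_apply, single_apply]
      split_ifs <;> subst_vars <;> first | omega | exact absurd rfl huv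
    · rintro ⟨hdeg, hle⟩
      obtain ⟨u, v, huv, hu, hv, hrest⟩ := exists_ne_pos_pos_forall_le_of_degree_eq
        (by rw [degree_collapseY, hdeg]) hle
      obtain ⟨g, hg, hgμ, hgc⟩ := exists_mem_edgeExponents_le huv hu hv
      have hμ : g + (μ - g) = μ := add_tsub_cancel_of_le hgμ
      refine ⟨g, hg, μ - g, ih.mpr ⟨?_, fun q => ?_⟩, hμ⟩
      · have := congrArg degree hμ
        rw [map_add, degree_of_mem_edgeExponents hg] at this
        omega
      · have hq := congrArg (collapseY · q) hμ
        simp only [map_add, Finsupp.add_apply, hgc, single_apply] at hq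
        have := hle q
        split_ifs at hq with hqu hqv hqv
        · exact absurd (hqu.trans hqv.symm) huv
        · omega
        · omega
        · have := hrest q (Ne.symm hqu) (Ne.symm hqv)
          omega

theorem card_filter_forall_le_finsuppAntidiag_two_mul_sub (ha : a ≠ 0) {n s : ℕ} (hs : s ≤ n) :
    #{α ∈ (univ : Finset (Fin a)).finsuppAntidiag (2 * n - s) | ∀ i, α i ≤ n} =
      (2 * n - s + a - 1).choose (a - 1) -
        a * (if 2 ≤ n - s + a then (n - s + a - 2).choose (a - 1) else 0) := by
  rcases hs.lt_or_eq with hs | rfl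
  · have h := card_filter_forall_le_finsuppAntidiag (ι := Fin a) (n := n) (d := 2 * n - s)
      (by omega) (by omega)
    rw [card_finsuppAntidiag_fin ha, card_finsuppAntidiag_fin ha, Fintype.card_fin] at h
    rw [if_pos (by omega)]
    convert h using 4
    omega
  · have hzero : (if 2 ≤ s - s + a then (s - s + a - 2).choose (a - 1) else 0) = 0 := by
      rw [ite_eq_right_iff]
      exact fun _ => Nat.choose_eq_zero_of_lt (by omega)
    have hbounded : ∀ α ∈ (univ : Finset (Fin a)).finsuppAntidiag (2 * s - s), ∀ i, α i ≤ s :=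
      fun α hα i => by
        have := le_degree i α
        rw [mem_univ_finsuppAntidiag] at hα
        omega
    rw [filter_true_of_mem hbounded, card_finsuppAntidiag_fin ha, hzero, mul_zero, Nat.sub_zero]

theorem card_filter_collapseY_le (n : ℕ) :
    #{μ ∈ (univ : Finset (Fin a ⊕ Fin b)).finsuppAntidiag (2 * n) | ∀ q, collapseY μ q ≤ n} =
      ∑ s ∈ range (n + 1), #((univ : Finset (Fin b)).finsuppAntidiag s) *
        #{α ∈ (univ : Finset (Fin a)).finsuppAntidiag (2 * n - s) | ∀ i, α i ≤ n} := by
  rw [card_eq_sum_card_fiberwise (f := fun μ => collapseY μ none) (t := range (n + 1))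
    fun μ hμ => by simpa [Nat.lt_succ_iff] using (mem_filter.mp (mem_coe.mp hμ)).2 none]
  refine sum_congr rfl fun s hs => ?_
  rw [← card_product]
  refine card_equiv (sumFinsuppEquivProdFinsupp.trans (Equiv.prodComm _ _)) fun μ => ?_
  have hsn := mem_range_succ_iff.mp hs
  simp only [mem_filter, mem_univ_finsuppAntidiag, mem_product, Option.forall,
    collapseY_apply_none, collapseY_apply_some, degree_eq_sum, Fintype.sum_sum_type,
    Equiv.trans_apply, Equiv.prodComm_apply, Prod.fst_swap, Prod.snd_swap,
    fst_sumFinsuppEquivProdFinsupp, snd_sumFinsuppEquivProdFinsupp]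
  constructor
  · rintro ⟨⟨hdeg, -, hx⟩, hy⟩
    exact ⟨hy, by omega, hx⟩
  · rintro ⟨hy, hdeg, hx⟩
    exact ⟨⟨by omega, by omega, hx⟩, hy⟩

theorem ncard_nsmul_edgeExponents (ha : a ≠ 0) (hb : b ≠ 0) (n : ℕ) :
    (n • edgeExponents a b).ncard =
      ∑ s ∈ range (n + 1), (s + b - 1).choose (b - 1) *
        ((2 * n - s + a - 1).choose (a - 1) -
          a * (if 2 ≤ n - s + a then (n - s + a - 2).choose (a - 1) else 0)) := by
  have hset : n • edgeExponents a b =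
      ↑{μ ∈ (univ : Finset (Fin a ⊕ Fin b)).finsuppAntidiag (2 * n) | ∀ q, collapseY μ q ≤ n} := by
    ext μ
    rw [mem_coe, mem_filter, mem_univ_finsuppAntidiag, mem_nsmul_edgeExponents_iff]
  rw [hset, Set.ncard_coe_finset, card_filter_collapseY_le]
  refine sum_congr rfl fun s hs => ?_
  rw [card_finsuppAntidiag_fin hb,
    card_filter_forall_le_finsuppAntidiag_two_mul_sub ha (mem_range_succ_iff.mp hs)]

end CompleteSplit

theorem stmt_16_general (k : Type*) [Field k] (a b n : ℕ) (ha : 1 ≤ a) (hb : 1 ≤ b)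
    (I : Ideal (MvPolynomial (Fin a ⊕ Fin b) k))
    (hI : I = Ideal.span
      ({p | ∃ i j : Fin a, i < j ∧ p = X (Sum.inl i) * X (Sum.inl j)} ∪
       {p | ∃ (i : Fin a) (t : Fin b), p = X (Sum.inl i) * X (Sum.inr t)})) :
    {μ : (Fin a ⊕ Fin b) →₀ ℕ |
        isMinimalGenerator (I ^ n) (monomial μ (1 : k))}.ncard =
      ∑ s ∈ Finset.range (n + 1),
        Nat.choose (s + b - 1) (b - 1) *
          (Nat.choose (2 * n - s + a - 1) (a - 1) -
            a * (if 2 ≤ n - s + a then Nat.choose (n - s + a - 2) (a - 1)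
                 else 0)) := by
  have hgen : {μ | isMinimalGenerator (I ^ n) (monomial μ (1 : k))} =
      n • CompleteSplit.edgeExponents a b := by
    ext μ
    rw [Set.mem_ofPred_eq, hI, CompleteSplit.span_edges_eq_monomialIdeal, ← monomialIdeal_nsmul,
      isMinimalGenerator_monomial_iff fun ν hν =>
        (CompleteSplit.mem_nsmul_edgeExponents_iff.mp hν).1]
  rw [hgen, CompleteSplit.ncard_nsmul_edgeExponents (by omega) (by omega)]

/-- Counting formula:
`μ(I^n) = Σ_{s=0}^{n} C(s+b-1,b-1)·[C(2n-s+a-1,a-1) - a·C(n-s+a-2,a-1)]`,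
with the convention that `C(r, s) = 0` when `r < 0` (the inner `if` handles
the case where `n - s + a - 2` would be negative as an integer). -/
theorem stmt_16 (k : Type*) [Field k] (a b n : ℕ) (ha : 1 ≤ a) (hb : 1 ≤ b)
    (hn : 1 ≤ n)
    (I : Ideal (MvPolynomial (Fin a ⊕ Fin b) k))
    (hI : I = Ideal.span
      ({p | ∃ i j : Fin a, i < j ∧ p = X (Sum.inl i) * X (Sum.inl j)} ∪
       {p | ∃ (i : Fin a) (t : Fin b), p = X (Sum.inl i) * X (Sum.inr t)})) :
    {μ : (Fin a ⊕ Fin b) →₀ ℕ |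
        isMinimalGenerator (I ^ n) (monomial μ (1 : k))}.ncard =
      ∑ s ∈ Finset.range (n + 1),
        Nat.choose (s + b - 1) (b - 1) *
          (Nat.choose (2 * n - s + a - 1) (a - 1) -
            a * (if 2 ≤ n - s + a then Nat.choose (n - s + a - 2) (a - 1)
                 else 0)) :=
  stmt_16_general k a b n ha hb I hI
end

section
/- Let a ≥ 1, b ≥ 1, n ≥ 1, and let M = {(α, β) ∈ ℕ^a × ℕ^b : |α| + |β| = 2n, |β| ≤ n, α_i ≤ n for all i}. Then M satisfies the polymatroid exchange property: for any (α, β), (α', β') ∈ M and any coordinate where the first vector strictly exceeds the second, there exists a coordinate where it is strictly smaller such that decreasing the first at the large coordinate and increasing it at the small coordinate by 1 stays in M. -/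
private lemma sum_exch {ι : Type*} [Fintype ι] [DecidableEq ι] (c : ι → ℕ) (p q : ι)
    (hq : q ≠ p) (hcp : 1 ≤ c p) :
    ∑ r, (if r = p then c r - 1 else if r = q then c r + 1 else c r) = ∑ r, c r := by
  have key : ∀ r, (if r = p then c r - 1 else if r = q then c r + 1 else c r)
      + (if r = p then 1 else 0) = c r + (if r = q then 1 else 0) := by
    intro r
    by_cases h1 : r = p
    · subst h1
      have h2 : ¬ r = q := fun h => hq h.symm
      simp [h2]
      omega
    · simp only [if_neg h1]
      split_ifs <;> omega
  have h2 : ∑ r, ((if r = p then c r - 1 else if r = q then c r + 1 else c r)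
      + (if r = p then 1 else 0)) = ∑ r, (c r + (if r = q then 1 else 0)) :=
    Finset.sum_congr rfl fun r _ => key r
  rw [Finset.sum_add_distrib, Finset.sum_add_distrib] at h2
  simp only [Finset.sum_ite_eq', Finset.mem_univ, if_true] at h2
  omega

private lemma sum_addone {ι : Type*} [Fintype ι] [DecidableEq ι] (c : ι → ℕ) (q : ι) :
    ∑ r, (if r = q then c r + 1 else c r) = (∑ r, c r) + 1 := by
  have h2 : ∑ r, (if r = q then c r + 1 else c r)
      = ∑ r, (c r + if r = q then 1 else 0) := by
    refine Finset.sum_congr rfl fun r _ => ?_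
    split_ifs <;> omega
  rw [h2, Finset.sum_add_distrib]
  simp

/-- The exponent vectors of the minimal generators of `I(K_a ∨ K̄_b)^n`
(viewed as functions `Fin a ⊕ Fin b → ℕ`, with the `α`-part on `Sum.inl`
and the `β`-part on `Sum.inr`) satisfy the symmetric exchange property of
the bases of a discrete polymatroid. -/
theorem stmt_18 (a b n : ℕ) (ha : 1 ≤ a) (hb : 1 ≤ b) (hn : 1 ≤ n)
    (M : Set (Fin a ⊕ Fin b → ℕ))
    (hM : M = {c | (∑ r, c r) = 2 * n ∧ (∑ t : Fin b, c (Sum.inr t)) ≤ n ∧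
      ∀ i : Fin a, c (Sum.inl i) ≤ n}) :
    ∀ c ∈ M, ∀ d ∈ M, ∀ p : Fin a ⊕ Fin b, d p < c p →
      ∃ q : Fin a ⊕ Fin b, c q < d q ∧
        (fun r => if r = p then c r - 1 else if r = q then c r + 1 else c r)
          ∈ M := by
  subst hM
  rintro c ⟨hc1, hc2, hc3⟩ d ⟨hd1, hd2, hd3⟩ p hp
  have hcp : 1 ≤ c p := by omega
  have hsc : (∑ i : Fin a, c (Sum.inl i)) + (∑ t : Fin b, c (Sum.inr t)) = 2 * n :=
    (Fintype.sum_sum_type c).symm.trans hc1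
  have hsd : (∑ i : Fin a, d (Sum.inl i)) + (∑ t : Fin b, d (Sum.inr t)) = 2 * n :=
    (Fintype.sum_sum_type d).symm.trans hd1
  cases p with
  | inl i =>
    by_cases hEx : ∃ j, c (Sum.inl j) < d (Sum.inl j)
    · obtain ⟨j, hj⟩ := hEx
      have hne : (Sum.inl j : Fin a ⊕ Fin b) ≠ Sum.inl i := by
        intro h; rw [h] at hj; omega
      refine ⟨Sum.inl j, hj, ?_, ?_, ?_⟩
      · rw [sum_exch c _ _ hne hcp]; exact hc1
      · have heq : ∀ t : Fin b,
            (if (Sum.inr t : Fin a ⊕ Fin b) = Sum.inl i then c (Sum.inr t) - 1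
              else if (Sum.inr t : Fin a ⊕ Fin b) = Sum.inl j then c (Sum.inr t) + 1
              else c (Sum.inr t)) = c (Sum.inr t) := by
          intro t; simp
        rw [Finset.sum_congr rfl fun t _ => heq t]
        exact hc2
      · intro i'
        by_cases h1 : (Sum.inl i' : Fin a ⊕ Fin b) = Sum.inl i
        · simp only [if_pos h1]
          exact le_trans (Nat.sub_le _ _) (hc3 i')
        · by_cases h2 : (Sum.inl i' : Fin a ⊕ Fin b) = Sum.inl j
          · simp only [if_neg h1, if_pos h2]
            have hij : i' = j := by injection h2
            subst hij
            have := hd3 i'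
            omega
          · simp only [if_neg h1, if_neg h2]; exact hc3 i'
    · push_neg at hEx
      have hlt : ∑ j, d (Sum.inl j) < ∑ j, c (Sum.inl j) :=
        Finset.sum_lt_sum (fun j _ => hEx j) ⟨i, Finset.mem_univ i, hp⟩
      have hblt : ∑ t : Fin b, c (Sum.inr t) < ∑ t : Fin b, d (Sum.inr t) := by omega
      have hq : ∃ t, c (Sum.inr t) < d (Sum.inr t) := by
        by_contra h; push_neg at h
        have hle : ∑ t : Fin b, d (Sum.inr t) ≤ ∑ t : Fin b, c (Sum.inr t) :=
          Finset.sum_le_sum fun t _ => h t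
        omega
      obtain ⟨t, ht⟩ := hq
      refine ⟨Sum.inr t, ht, ?_, ?_, ?_⟩
      · rw [sum_exch c _ _ (by simp) hcp]; exact hc1
      · have heq : ∀ t' : Fin b,
            (if (Sum.inr t' : Fin a ⊕ Fin b) = Sum.inl i then c (Sum.inr t') - 1
              else if (Sum.inr t' : Fin a ⊕ Fin b) = Sum.inr t then c (Sum.inr t') + 1
              else c (Sum.inr t')) =
            (if t' = t then c (Sum.inr t') + 1 else c (Sum.inr t')) := by
          intro t'; simp
        rw [Finset.sum_congr rfl fun t' _ => heq t',
          sum_addone (fun t' => c (Sum.inr t')) t]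
        have hn2 : ∑ t', c (Sum.inr t') < n := lt_of_lt_of_le hblt hd2
        omega
      · intro i'
        by_cases h1 : (Sum.inl i' : Fin a ⊕ Fin b) = Sum.inl i
        · simp only [if_pos h1]
          exact le_trans (Nat.sub_le _ _) (hc3 i')
        · have h2 : (Sum.inl i' : Fin a ⊕ Fin b) ≠ Sum.inr t := by simp
          simp only [if_neg h1, if_neg h2]; exact hc3 i'
  | inr t1 =>
    by_cases hEx : ∃ t, c (Sum.inr t) < d (Sum.inr t)
    · obtain ⟨t, ht⟩ := hEx
      have hne : (Sum.inr t : Fin a ⊕ Fin b) ≠ Sum.inr t1 := by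
        intro h; rw [h] at ht; omega
      have hne' : t ≠ t1 := by
        intro h; exact hne (by rw [h])
      refine ⟨Sum.inr t, ht, ?_, ?_, ?_⟩
      · rw [sum_exch c _ _ hne hcp]; exact hc1
      · have heq : ∀ t' : Fin b,
            (if (Sum.inr t' : Fin a ⊕ Fin b) = Sum.inr t1 then c (Sum.inr t') - 1
              else if (Sum.inr t' : Fin a ⊕ Fin b) = Sum.inr t then c (Sum.inr t') + 1
              else c (Sum.inr t')) =
            (if t' = t1 then c (Sum.inr t') - 1
              else if t' = t then c (Sum.inr t') + 1 else c (Sum.inr t')) := by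
          intro t'; simp
        rw [Finset.sum_congr rfl fun t' _ => heq t',
          sum_exch (fun t' => c (Sum.inr t')) t1 t hne' hcp]
        exact hc2
      · intro i'
        have h1 : (Sum.inl i' : Fin a ⊕ Fin b) ≠ Sum.inr t1 := by simp
        have h2 : (Sum.inl i' : Fin a ⊕ Fin b) ≠ Sum.inr t := by simp
        simp only [if_neg h1, if_neg h2]; exact hc3 i'
    · push_neg at hEx
      have hlt : ∑ t, d (Sum.inr t) < ∑ t, c (Sum.inr t) :=
        Finset.sum_lt_sum (fun t _ => hEx t) ⟨t1, Finset.mem_univ t1, hp⟩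
      have halt : ∑ j : Fin a, c (Sum.inl j) < ∑ j : Fin a, d (Sum.inl j) := by omega
      have hq : ∃ j, c (Sum.inl j) < d (Sum.inl j) := by
        by_contra h; push_neg at h
        have hle : ∑ j : Fin a, d (Sum.inl j) ≤ ∑ j : Fin a, c (Sum.inl j) :=
          Finset.sum_le_sum fun j _ => h j
        omega
      obtain ⟨j, hj⟩ := hq
      refine ⟨Sum.inl j, hj, ?_, ?_, ?_⟩
      · rw [sum_exch c _ _ (by simp) hcp]; exact hc1
      · have heq : ∀ t' : Fin b,
            (if (Sum.inr t' : Fin a ⊕ Fin b) = Sum.inr t1 then c (Sum.inr t') - 1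
              else if (Sum.inr t' : Fin a ⊕ Fin b) = Sum.inl j then c (Sum.inr t') + 1
              else c (Sum.inr t')) ≤ c (Sum.inr t') := by
          intro t'; split_ifs with h1 h2
          · omega
          · exact absurd h2 (by simp)
          · exact le_rfl
        calc _ ≤ ∑ t', c (Sum.inr t') := Finset.sum_le_sum fun t' _ => heq t'
          _ ≤ n := hc2
      · intro i'
        have h1 : (Sum.inl i' : Fin a ⊕ Fin b) ≠ Sum.inr t1 := by simp
        by_cases h2 : (Sum.inl i' : Fin a ⊕ Fin b) = Sum.inl j
        · simp only [if_neg h1, if_pos h2]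
          have hij : i' = j := by injection h2
          subst hij
          have := hd3 i'
          omega
        · simp only [if_neg h1, if_neg h2]; exact hc3 i'
end
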